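/- arXiv:1410.5774 — 2 statements merged into one kernel-verified Lean document; each statement's English description precedes it below -/
import Mathlib

section
/- Let p, q be coprime integers with 0 < p < q and q odd, and set ε_i = (-1)^⌊ip/q⌋ for 1 ≤ i ≤ q-1. Define Δ(t) = 1 - t^{ε_1} + t^{ε_1+ε_2} - t^{ε_1+ε_2+ε_3} + ... + t^{ε_1+...+ε_{q-1}} as a Laurent polynomial in t. Then Δ(-1) = q. -/
theorem stmt_4 (p q : ℕ) (hcop : Nat.Coprime p q) (hp : 0 < p) (hpq : p < q)
    (hqodd : Odd q) (ε : ℕ → ℤ) (hε : ∀ i, ε i = (-1) ^ ((i * p) / q))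
    (σ : ℕ → ℤ) (hσ : ∀ ℓ, σ ℓ = ∑ i ∈ Finset.Icc 1 ℓ, ε i) :
    ∑ ℓ ∈ Finset.range q, (-1 : ℝ) ^ ℓ * (-1 : ℝ) ^ (σ ℓ) = q := by
  have hpar : ∀ ℓ : ℕ, Even (σ ℓ + ℓ) := by
    intro ℓ
    induction ℓ with
    | zero => simp [hσ]
    | succ n ih =>
      have hstep : σ (n + 1) = σ n + ε (n + 1) := by
        rw [hσ, hσ, Finset.sum_Icc_succ_top (by omega : 1 ≤ n + 1)]
      have hodd : Odd (ε (n + 1)) := by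
        rw [hε]
        exact Odd.pow (by decide)
      have : σ (n + 1) + (↑(n + 1) : ℤ) = (σ n + n) + (ε (n + 1) + 1) := by
        push_cast [hstep]; ring
      rw [this]
      exact ih.add (hodd.add_odd odd_one)
  have hterm : ∀ ℓ : ℕ, (-1 : ℝ) ^ ℓ * (-1 : ℝ) ^ (σ ℓ) = 1 := by
    intro ℓ
    have : (-1 : ℝ) ^ ℓ = (-1 : ℝ) ^ (ℓ : ℤ) := (zpow_natCast _ _).symm
    rw [this, ← zpow_add₀ (by norm_num : (-1 : ℝ) ≠ 0)]
    have : Even ((ℓ : ℤ) + σ ℓ) := by rw [add_comm]; exact hpar ℓ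
    exact this.neg_one_zpow
  rw [Finset.sum_congr rfl (fun ℓ _ => hterm ℓ)]
  simp
end

section
/- The polynomial Δ(t) = 1 - 11t + 41t² - 63t³ + 41t⁴ - 11t⁵ + t⁶ has six real roots (counted with multiplicity), all of which are positive. -/
/-- For s ≥ 2, the quadratic t² - s t + 1 has two positive roots. -/
lemma pair_roots (s : ℝ) (hs : 2 ≤ s) :
    ∃ a b : ℝ, 0 < a ∧ 0 < b ∧ a + b = s ∧ a * b = 1 := by
  have h4 : (0:ℝ) ≤ s ^ 2 - 4 := by nlinarith
  have hsq : Real.sqrt (s ^ 2 - 4) ^ 2 = s ^ 2 - 4 := Real.sq_sqrt h4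
  have hlt : Real.sqrt (s ^ 2 - 4) < s :=
    (Real.sqrt_lt' (by linarith)).mpr (by linarith)
  refine ⟨(s + Real.sqrt (s ^ 2 - 4)) / 2, (s - Real.sqrt (s ^ 2 - 4)) / 2, ?_, ?_, by ring, ?_⟩
  · have := Real.sqrt_nonneg (s ^ 2 - 4); linarith
  · linarith
  · nlinarith [hsq]

/-- IVT for the cubic x³-11x²+38x-41, increasing case. -/
lemma cubic_root (lo hi : ℝ) (hle : lo ≤ hi)
    (h1 : lo ^ 3 - 11 * lo ^ 2 + 38 * lo - 41 ≤ 0)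
    (h2 : 0 ≤ hi ^ 3 - 11 * hi ^ 2 + 38 * hi - 41) :
    ∃ s ∈ Set.Icc lo hi, s ^ 3 - 11 * s ^ 2 + 38 * s - 41 = 0 := by
  have hc : ContinuousOn (fun x : ℝ => x ^ 3 - 11 * x ^ 2 + 38 * x - 41) (Set.Icc lo hi) := by
    fun_prop
  obtain ⟨s, hs, hval⟩ := intermediate_value_Icc hle hc ⟨h1, h2⟩
  exact ⟨s, hs, hval⟩

/-- IVT for the cubic, decreasing case. -/
lemma cubic_root' (lo hi : ℝ) (hle : lo ≤ hi)
    (h1 : 0 ≤ lo ^ 3 - 11 * lo ^ 2 + 38 * lo - 41)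
    (h2 : hi ^ 3 - 11 * hi ^ 2 + 38 * hi - 41 ≤ 0) :
    ∃ s ∈ Set.Icc lo hi, s ^ 3 - 11 * s ^ 2 + 38 * s - 41 = 0 := by
  have hc : ContinuousOn (fun x : ℝ => x ^ 3 - 11 * x ^ 2 + 38 * x - 41) (Set.Icc lo hi) := by
    fun_prop
  obtain ⟨s, hs, hval⟩ := intermediate_value_Icc' hle hc ⟨h2, h1⟩
  exact ⟨s, hs, hval⟩

theorem stmt_11 :
    ∃ r : Fin 6 → ℝ, (∀ i, 0 < r i) ∧
      ∀ t : ℝ, 1 - 11 * t + 41 * t ^ 2 - 63 * t ^ 3 + 41 * t ^ 4 - 11 * t ^ 5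
        + t ^ 6 = ∏ i, (t - r i) := by
  obtain ⟨s1, hs1m, hs1⟩ := cubic_root 2 3 (by norm_num) (by norm_num) (by norm_num)
  obtain ⟨s2, hs2m, hs2⟩ := cubic_root' 3 4 (by norm_num) (by norm_num) (by norm_num)
  obtain ⟨s3, hs3m, hs3⟩ := cubic_root 5 6 (by norm_num) (by norm_num) (by norm_num)
  -- distinctness
  have h13 : s1 < 3 := lt_of_le_of_ne hs1m.2 (by rintro rfl; norm_num at hs1)
  have h23 : 3 < s2 := lt_of_le_of_ne hs2m.1 (by rintro rfl; norm_num at hs2)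
  have hne12 : s1 ≠ s2 := by linarith
  have hne13 : s1 ≠ s3 := by linarith [hs1m.2, hs3m.1]
  have hne23 : s2 ≠ s3 := by linarith [hs2m.2, hs3m.1]
  -- pairwise quotient relations
  have g12 : s1 ^ 2 + s1 * s2 + s2 ^ 2 - 11 * (s1 + s2) + 38 = 0 := by
    have h : (s1 - s2) * (s1 ^ 2 + s1 * s2 + s2 ^ 2 - 11 * (s1 + s2) + 38) = 0 := by
      linear_combination hs1 - hs2
    rcases mul_eq_zero.mp h with h | h
    · exact absurd (by linarith [sub_eq_zero.mp h]) hne12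
    · exact h
  have g23 : s2 ^ 2 + s2 * s3 + s3 ^ 2 - 11 * (s2 + s3) + 38 = 0 := by
    have h : (s2 - s3) * (s2 ^ 2 + s2 * s3 + s3 ^ 2 - 11 * (s2 + s3) + 38) = 0 := by
      linear_combination hs2 - hs3
    rcases mul_eq_zero.mp h with h | h
    · exact absurd (by linarith [sub_eq_zero.mp h]) hne23
    · exact h
  -- elementary symmetric functions
  have he1 : s1 + s2 + s3 = 11 := by
    have h : (s1 - s3) * (s1 + s2 + s3 - 11) = 0 := by linear_combination g12 - g23
    rcases mul_eq_zero.mp h with h | h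
    · exact absurd (by linarith [sub_eq_zero.mp h]) hne13
    · linarith [sub_eq_zero.mp (by linarith : s1 + s2 + s3 - 11 = 0)]
  have he2 : s1 * s2 + s1 * s3 + s2 * s3 = 38 := by
    linear_combination (-1 : ℝ) * g12 + (s1 + s2) * he1
  have he3 : s1 * s2 * s3 = 41 := by
    linear_combination hs3 + s3 * he2 - s3 ^ 2 * he1
  -- split each quadratic
  obtain ⟨a1, b1, ha1, hb1, hab1, hp1⟩ := pair_roots s1 hs1m.1
  obtain ⟨a2, b2, ha2, hb2, hab2, hp2⟩ := pair_roots s2 (by linarith [hs2m.1])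
  obtain ⟨a3, b3, ha3, hb3, hab3, hp3⟩ := pair_roots s3 (by linarith [hs3m.1])
  refine ⟨![a1, b1, a2, b2, a3, b3], ?_, ?_⟩
  · intro i; fin_cases i <;> assumption
  · intro t
    rw [Fin.prod_univ_six]
    show _ = (t - a1) * (t - b1) * (t - a2) * (t - b2) * (t - a3) * (t - b3)
    linear_combination (t^5 + 2*t^3 + t) * he1 - (t^4 + t^2) * he2 + t^3 * he3
      + (t * (t^2 - s2*t + 1) * (t^2 - s3*t + 1)) * hab1
      - ((t^2 - s2*t + 1) * (t^2 - s3*t + 1)) * hp1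
      + (t * (t - a1) * (t - b1) * (t^2 - s3*t + 1)) * hab2
      - ((t - a1) * (t - b1) * (t^2 - s3*t + 1)) * hp2
      + (t * (t - a1) * (t - b1) * (t - a2) * (t - b2)) * hab3
      - ((t - a1) * (t - b1) * (t - a2) * (t - b2)) * hp3
end
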